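/- The S sum rule with tie-breaking by S lex-cel R^{SSUM,SL} satisfies neutrality (NT), concatenation consistency (CCON), and all indifference all winners (AIAW), but does not satisfy independence of the decomposition of the worst sets (IDWS). -/
import Mathlib


namespace SocRank

/-- A coalitional ranking (a weak order on a set of feasible nonempty coalitions),
represented by its list of equivalence classes, listed from best to worst. -/
structure CoalRanking (X : Type*) where
  classes : List (Finset (Finset X))
  class_nonempty : ∀ C ∈ classes, C.Nonempty
  coal_nonempty : ∀ C ∈ classes, ∀ S ∈ C, S.Nonempty
  classes_disjoint : classes.Pairwise Disjoint

namespace CoalRanking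

variable {X : Type*}

/-- The coalition domain `𝒟(≿)` of a coalitional ranking. -/
def domain [DecidableEq X] (r : CoalRanking X) : Finset (Finset X) :=
  r.classes.foldr (· ∪ ·) ∅

/-- The list of equivalence classes of the restriction of a ranking to a set `D`
of coalitions. -/
def restrictClasses [DecidableEq X] (r : CoalRanking X) (D : Finset (Finset X)) :
    List (Finset (Finset X)) :=
  (r.classes.map (· ∩ D)).filter (fun C => decide C.Nonempty)

/-- Merging two lists of equivalence classes by aligning them at the top. -/
def zipUnion [DecidableEq X] :
    List (Finset (Finset X)) → List (Finset (Finset X)) → List (Finset (Finset X))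
  | [], M => M
  | L, [] => L
  | A :: L, B :: M => (A ∪ B) :: zipUnion L M

/-- `r` is a sum of the disjoint rankings `r₁` and `r₂`: its domain is the union of
the two domains and its restriction to the domain of `rᵢ` is `rᵢ`. -/
def IsSum [DecidableEq X] (r r₁ r₂ : CoalRanking X) : Prop :=
  Disjoint r₁.domain r₂.domain ∧
  r.domain = r₁.domain ∪ r₂.domain ∧
  r.restrictClasses r₁.domain = r₁.classes ∧
  r.restrictClasses r₂.domain = r₂.classes

/-- `r` is the concatenation sum `r₁ · r₂` of the disjoint rankings `r₁` and `r₂`. -/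
def IsConcatSum [DecidableEq X] (r r₁ r₂ : CoalRanking X) : Prop :=
  Disjoint r₁.domain r₂.domain ∧ r.classes = r₁.classes ++ r₂.classes

/-- `r` is the top-aligned sum `r₁ ⊨ r₂` of the disjoint rankings `r₁` and `r₂`. -/
def IsTopAlignedSum [DecidableEq X] (r r₁ r₂ : CoalRanking X) : Prop :=
  Disjoint r₁.domain r₂.domain ∧ r.classes = zipUnion r₁.classes r₂.classes

/-- `r` is the bottom-aligned sum `r₁ ⫤ r₂` of the disjoint rankings `r₁` and `r₂`. -/
def IsBottomAlignedSum [DecidableEq X] (r r₁ r₂ : CoalRanking X) : Prop :=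
  Disjoint r₁.domain r₂.domain ∧
  r.classes = (zipUnion r₁.classes.reverse r₂.classes.reverse).reverse

/-- Renaming the individuals of a coalitional ranking by a permutation `σ` of `X`:
the ranking `≿^σ`. -/
def mapPerm [DecidableEq X] (σ : Equiv.Perm X) (r : CoalRanking X) : CoalRanking X where
  classes := r.classes.map (fun C => C.image (fun S => S.image σ))
  class_nonempty := by
    intro C hC
    simp only [List.mem_map] at hC
    obtain ⟨C₀, hC₀, rfl⟩ := hC
    exact (r.class_nonempty C₀ hC₀).image _
  coal_nonempty := by
    intro C hC S hS
    simp only [List.mem_map] at hC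
    obtain ⟨C₀, hC₀, rfl⟩ := hC
    simp only [Finset.mem_image] at hS
    obtain ⟨S₀, hS₀, rfl⟩ := hS
    exact (r.coal_nonempty C₀ hC₀ S₀ hS₀).image _
  classes_disjoint := by
    refine List.Pairwise.map _ (fun {A B} h => ?_) r.classes_disjoint
    exact (Finset.disjoint_image
      (Finset.image_injective σ.injective)).mpr h

/-- Renaming the coalitions of a coalitional ranking by a permutation `π` of the set of
coalitions (mapping nonempty sets to nonempty sets): the ranking `≿_π`. -/
def mapCoalPerm [DecidableEq X] (π : Equiv.Perm (Finset X))
    (hπ : ∀ S : Finset X, S.Nonempty → (π S).Nonempty) (r : CoalRanking X) :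
    CoalRanking X where
  classes := r.classes.map (fun C => C.image π)
  class_nonempty := by
    intro C hC
    simp only [List.mem_map] at hC
    obtain ⟨C₀, hC₀, rfl⟩ := hC
    exact (r.class_nonempty C₀ hC₀).image _
  coal_nonempty := by
    intro C hC S hS
    simp only [List.mem_map] at hC
    obtain ⟨C₀, hC₀, rfl⟩ := hC
    simp only [Finset.mem_image] at hS
    obtain ⟨S₀, hS₀, rfl⟩ := hS
    exact hπ S₀ (r.coal_nonempty C₀ hC₀ S₀ hS₀)
  classes_disjoint := by
    refine List.Pairwise.map _ (fun {A B} h => ?_) r.classes_disjoint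
    exact (Finset.disjoint_image π.injective).mpr h

end CoalRanking

open CoalRanking

variable {X : Type*}

/-- A social ranking solution: a map assigning to every coalitional ranking a binary
relation on the individuals. -/
abbrev SRSMap (X : Type*) := CoalRanking X → X → X → Prop

/-- The symmetric part `I` of the social ranking. -/
def Ind (R : SRSMap X) (r : CoalRanking X) (x y : X) : Prop := R r x y ∧ R r y x

/-- The asymmetric part `P` of the social ranking. -/
def Pref (R : SRSMap X) (r : CoalRanking X) (x y : X) : Prop := R r x y ∧ ¬ R r y x

/-- Conditions (1)-(4) of consistency for the triple `(r₁, r₂, r)`. -/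
def ConsistentAt (R : SRSMap X) (r₁ r₂ r : CoalRanking X) : Prop :=
  ∀ x y : X,
    (Ind R r₁ x y → Ind R r₂ x y → Ind R r x y) ∧
    (Ind R r₁ x y → Pref R r₂ x y → Pref R r x y) ∧
    (Pref R r₁ x y → Ind R r₂ x y → Pref R r x y) ∧
    (Pref R r₁ x y → Pref R r₂ x y → Pref R r x y)

/-- Consistency (CON). -/
def CON [DecidableEq X] (R : SRSMap X) : Prop :=
  ∀ r₁ r₂ r : CoalRanking X, IsSum r r₁ r₂ → ConsistentAt R r₁ r₂ r

/-- Concatenation consistency (CCON). -/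
def CCON [DecidableEq X] (R : SRSMap X) : Prop :=
  ∀ r₁ r₂ r : CoalRanking X, IsConcatSum r r₁ r₂ → ConsistentAt R r₁ r₂ r

/-- Top-aligned consistency (TCON). -/
def TCON [DecidableEq X] (R : SRSMap X) : Prop :=
  ∀ r₁ r₂ r : CoalRanking X, IsTopAlignedSum r r₁ r₂ → ConsistentAt R r₁ r₂ r

/-- Bottom-aligned consistency (BCON). -/
def BCON [DecidableEq X] (R : SRSMap X) : Prop :=
  ∀ r₁ r₂ r : CoalRanking X, IsBottomAlignedSum r r₁ r₂ → ConsistentAt R r₁ r₂ r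

/-- II-concatenation consistency. -/
def IICCON [DecidableEq X] (R : SRSMap X) : Prop :=
  ∀ r₁ r₂ r : CoalRanking X, IsConcatSum r r₁ r₂ →
    ∀ x y : X, Ind R r₁ x y → Ind R r₂ x y → Ind R r x y

/-- IP-concatenation consistency. -/
def IPCCON [DecidableEq X] (R : SRSMap X) : Prop :=
  ∀ r₁ r₂ r : CoalRanking X, IsConcatSum r r₁ r₂ →
    ∀ x y : X, Ind R r₁ x y → Pref R r₂ x y → Pref R r x y

/-- PI-concatenation consistency. -/
def PICCON [DecidableEq X] (R : SRSMap X) : Prop :=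
  ∀ r₁ r₂ r : CoalRanking X, IsConcatSum r r₁ r₂ →
    ∀ x y : X, Pref R r₁ x y → Ind R r₂ x y → Pref R r x y

/-- PP-concatenation consistency. -/
def PPCCON [DecidableEq X] (R : SRSMap X) : Prop :=
  ∀ r₁ r₂ r : CoalRanking X, IsConcatSum r r₁ r₂ →
    ∀ x y : X, Pref R r₁ x y → Pref R r₂ x y → Pref R r x y

/-- `x_k`: the number of coalitions of the class `C` containing `x`. -/
def cnt [DecidableEq X] (x : X) (C : Finset (Finset X)) : ℕ :=
  (C.filter (fun S => x ∈ S)).card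

/-- The vector `θ_≿(x) = (x₁, …, x_l)`. -/
def theta [DecidableEq X] (r : CoalRanking X) (x : X) : List ℕ :=
  r.classes.map (cnt x)

/-- `sign`: `1` on positive numbers, `0` otherwise. -/
def sgn (n : ℕ) : ℕ := if 0 < n then 1 else 0

/-- The vector `θ̇_≿(x) = (sign(x₁), …, sign(x_l))`. -/
def thetaDot [DecidableEq X] (r : CoalRanking X) (x : X) : List ℕ :=
  (theta r x).map sgn

/-- The lexicographic order `≥^L` on vectors (of equal length). -/
def lexGE : List ℕ → List ℕ → Prop
  | _, [] => True
  | [], _ :: _ => False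
  | a :: as, b :: bs => b < a ∨ (a = b ∧ lexGE as bs)

/-- The lexicographic excellence solution (lex-cel) `R^L`. -/
def lexcel [DecidableEq X] : SRSMap X := fun r x y => lexGE (theta r x) (theta r y)

/-- The sign lexicographic excellence solution (S lex-cel) `R^{SL}`. -/
def slexcel [DecidableEq X] : SRSMap X := fun r x y => lexGE (thetaDot r x) (thetaDot r y)

/-- The plurality solution `R^P`. -/
def plurality [DecidableEq X] : SRSMap X := fun r x y =>
  (theta r y).headD 0 ≤ (theta r x).headD 0

/-- The sign plurality solution `R^{SP}`. -/
def splurality [DecidableEq X] : SRSMap X := fun r x y =>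
  sgn ((theta r y).headD 0) ≤ sgn ((theta r x).headD 0)

/-- The anti-plurality solution `R^{AP}`. -/
def antiplurality [DecidableEq X] : SRSMap X := fun r x y =>
  (theta r x).getLastD 0 ≤ (theta r y).getLastD 0

/-- `e_≿(x)`: the largest `k` such that `x` belongs to every coalition of each of the
first `k` equivalence classes. -/
def eIIS [DecidableEq X] (r : CoalRanking X) (x : X) : ℕ :=
  (r.classes.takeWhile (fun C => decide (∀ S ∈ C, x ∈ S))).length

/-- The intersection initial segment solution (IIS) `R^{IIS}`. -/
def iis [DecidableEq X] : SRSMap X := fun r x y => eIIS r y ≤ eIIS r x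

/-- The index of the equivalence class a coalition belongs to. -/
def classIdx [DecidableEq X] (r : CoalRanking X) (S : Finset X) : ℕ :=
  r.classes.findIdx (fun C => decide (S ∈ C))

/-- `C_{xy}`: the number of CP comparisons in favour of `x` against `y`. -/
def cpCount [DecidableEq X] [Fintype X] (r : CoalRanking X) (x y : X) : ℕ :=
  ((Finset.univ : Finset (Finset X)).filter (fun S =>
    S.Nonempty ∧ x ∉ S ∧ y ∉ S ∧ insert x S ∈ r.domain ∧ insert y S ∈ r.domain ∧
    classIdx r (insert x S) < classIdx r (insert y S))).card

/-- The Ceteris Paribus majority solution `R^{CPM}`. -/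
def cpm [DecidableEq X] [Fintype X] : SRSMap X := fun r x y =>
  cpCount r y x ≤ cpCount r x y

/-- Neutrality (NT). -/
def NT [DecidableEq X] (R : SRSMap X) : Prop :=
  ∀ (σ : Equiv.Perm X) (r : CoalRanking X) (x y : X),
    R (r.mapPerm σ) (σ x) (σ y) ↔ R r x y

/-- Weak coalitional anonymity (WCA). -/
def WCA [DecidableEq X] (R : SRSMap X) : Prop :=
  ∀ (x y : X) (π : Equiv.Perm (Finset X))
    (hπ : ∀ S : Finset X, S.Nonempty → (π S).Nonempty),
    (∀ S : Finset X, x ∈ S → x ∈ π S) → (∀ S : Finset X, y ∈ S → y ∈ π S) →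
    ∀ r : CoalRanking X,
      (R (r.mapCoalPerm π hπ) x y ↔ R r x y) ∧ (R (r.mapCoalPerm π hπ) y x ↔ R r y x)

/-- The weak union very important person property (WUVIP). -/
def WUVIP (R : SRSMap X) : Prop :=
  ∀ (r : CoalRanking X) (A B : Finset (Finset X)), r.classes = [A, B] →
    ∀ x y : X, (∃ S ∈ A, x ∈ S) → (∀ S ∈ A, y ∉ S) → Pref R r x y

/-- All indifference all winners (AIAW). -/
def AIAW [DecidableEq X] (R : SRSMap X) : Prop :=
  ∀ r : CoalRanking X, r.classes.length ≤ 1 →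
    (∀ x y : X, (∃ S ∈ r.domain, x ∈ S) → (∃ S ∈ r.domain, y ∈ S) → Ind R r x y) ∧
    (∀ x z : X, (∃ S ∈ r.domain, x ∈ S) → (∀ S ∈ r.domain, z ∉ S) → Pref R r x z)

/-- Independence of the decomposition of the worst sets (IDWS). -/
def IDWS [DecidableEq X] (R : SRSMap X) : Prop :=
  ∀ (r r' : CoalRanking X) (L G : List (Finset (Finset X))) (W : Finset (Finset X)),
    L ≠ [] → r.classes = L ++ [W] → r'.classes = L ++ G →
    G.foldr (· ∪ ·) ∅ = W →
    ∀ x y : X, Pref R r x y → Pref R r' x y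

/-- Independence of the addition of the worst sets (IAWS). -/
def IAWS [DecidableEq X] (R : SRSMap X) : Prop :=
  ∀ (r r' : CoalRanking X) (G : Finset (Finset X)),
    r'.classes = r.classes ++ [G] → (∀ S ∈ G, S ∉ r.domain) →
    ∀ x y : X, Pref R r x y → Pref R r' x y

/-- Tops-only (TO). -/
def TO (R : SRSMap X) : Prop :=
  ∀ (r r' : CoalRanking X) (A : Finset (Finset X)),
    r.classes.head? = some A → r'.classes.head? = some A → R r = R r'

/-- The dual S lex-cel `R^{DSL}`. -/
def dslexcel [DecidableEq X] : SRSMap X := fun r x y =>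
  lexGE ((thetaDot r y).reverse) ((thetaDot r x).reverse)

/-- The inverse dual S lex-cel `R^{IDSL}`. -/
def idslexcel [DecidableEq X] : SRSMap X := fun r x y => dslexcel r y x

/-- The vector `θ̃_≿(x)` used by the S lex-cel with precedence on unanimity. -/
def tildeTheta [DecidableEq X] (r : CoalRanking X) (x : X) : List ℕ :=
  r.classes.map (fun C => if cnt x C = C.card then 2 else if 0 < cnt x C then 1 else 0)

/-- The S lex-cel with a particular precedence on unanimity `R^{SLUN}`. -/
def slun [DecidableEq X] : SRSMap X := fun r x y =>
  lexGE (tildeTheta r x) (tildeTheta r y)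

/-- The S sum score `Σ_k sign(x_k)`. -/
def ssum [DecidableEq X] (r : CoalRanking X) (x : X) : ℕ := (thetaDot r x).sum

/-- The S sum rule with tie-breaking by S lex-cel `R^{SSUM,SL}`. -/
def ssumSL [DecidableEq X] : SRSMap X := fun r x y =>
  ssum r y < ssum r x ∨ (ssum r x = ssum r y ∧ slexcel r x y)

end SocRank

open SocRank

namespace SocRankAux

open SocRank CoalRanking

lemma lexGE_refl : ∀ a : List ℕ, lexGE a a
  | [] => trivial
  | _ :: as => Or.inr ⟨rfl, lexGE_refl as⟩

lemma lexGE_cons (x y : ℕ) (u v : List ℕ) :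
    lexGE (x :: u) (y :: v) ↔ (y < x ∨ (x = y ∧ lexGE u v)) := Iff.rfl

lemma lexGE_append : ∀ (c a b : List ℕ), lexGE (c ++ a) (c ++ b) ↔ lexGE a b
  | [], _, _ => Iff.rfl
  | x :: c, a, b => by
    simp only [List.cons_append, lexGE_cons, lt_irrefl, false_or, true_and,
      lexGE_append c a b]

lemma lexGE_antisymm : ∀ {a b : List ℕ}, a.length = b.length →
    lexGE a b → lexGE b a → a = b
  | [], [], _, _, _ => rfl
  | [], _ :: _, h, _, _ => by simp at h
  | _ :: _, [], h, _, _ => by simp at h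
  | x :: u, y :: v, h, h1, h2 => by
    rcases h1 with h1 | ⟨rfl, h1⟩
    · rcases h2 with h2 | ⟨h2, _⟩ <;> omega
    · rcases h2 with h2 | ⟨_, h2⟩
      · omega
      · rw [lexGE_antisymm (by simpa using h) h1 h2]

lemma lexGT_append : ∀ {a b : List ℕ}, a.length = b.length →
    lexGE a b → ¬ lexGE b a → ∀ c d : List ℕ,
    lexGE (a ++ c) (b ++ d) ∧ ¬ lexGE (b ++ d) (a ++ c)
  | [], [], _, _, h2, _, _ => absurd trivial h2
  | [], _ :: _, h, _, _, _, _ => by simp at h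
  | _ :: _, [], h, _, _, _, _ => by simp at h
  | x :: u, y :: v, h, h1, h2, c, d => by
    rcases h1 with h1 | ⟨rfl, h1⟩
    · refine ⟨Or.inl h1, ?_⟩
      rintro (h3 | ⟨h3, -⟩) <;> omega
    · have h2' : ¬ lexGE v u := fun hv => h2 (Or.inr ⟨rfl, hv⟩)
      obtain ⟨ha, hb⟩ := lexGT_append (by simpa using h) h1 h2' c d
      refine ⟨Or.inr ⟨rfl, ha⟩, ?_⟩
      rintro (h3 | ⟨-, h3⟩)
      · omega
      · exact hb h3

variable {X : Type*} [DecidableEq X]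

lemma thetaDot_length (r : CoalRanking X) (x : X) :
    (thetaDot r x).length = r.classes.length := by
  simp [thetaDot, theta]

lemma ind_ssumSL {r : CoalRanking X} {x y : X} :
    Ind ssumSL r x y ↔ ssum r x = ssum r y ∧ thetaDot r x = thetaDot r y := by
  constructor
  · rintro ⟨h1 | ⟨h1, h1'⟩, h2 | ⟨h2, h2'⟩⟩
    · omega
    · omega
    · omega
    · exact ⟨h1, lexGE_antisymm (by rw [thetaDot_length, thetaDot_length]) h1' h2'⟩
  · rintro ⟨h1, h2⟩
    refine ⟨Or.inr ⟨h1, ?_⟩, Or.inr ⟨h1.symm, ?_⟩⟩ <;> unfold slexcel <;> rw [h2] <;>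
      exact lexGE_refl _

lemma pref_ssumSL {r : CoalRanking X} {x y : X} :
    Pref ssumSL r x y ↔ ssum r y < ssum r x ∨
      (ssum r x = ssum r y ∧ lexGE (thetaDot r x) (thetaDot r y) ∧
        ¬ lexGE (thetaDot r y) (thetaDot r x)) := by
  constructor
  · rintro ⟨h1 | ⟨h1, h1'⟩, h2⟩
    · exact Or.inl h1
    · refine Or.inr ⟨h1, h1', fun h3 => h2 (Or.inr ⟨h1.symm, h3⟩)⟩
  · rintro (h1 | ⟨h1, h2, h3⟩)
    · refine ⟨Or.inl h1, ?_⟩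
      rintro (h2 | ⟨h2, -⟩) <;> omega
    · refine ⟨Or.inr ⟨h1, h2⟩, ?_⟩
      rintro (h4 | ⟨-, h4⟩)
      · omega
      · exact h3 h4

lemma thetaDot_concat {r r₁ r₂ : CoalRanking X}
    (h : r.classes = r₁.classes ++ r₂.classes) (x : X) :
    thetaDot r x = thetaDot r₁ x ++ thetaDot r₂ x := by
  simp [thetaDot, theta, h]

lemma ssum_concat {r r₁ r₂ : CoalRanking X}
    (h : r.classes = r₁.classes ++ r₂.classes) (x : X) :
    ssum r x = ssum r₁ x + ssum r₂ x := by
  simp [ssum, thetaDot_concat h]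

lemma cnt_mapPerm (σ : Equiv.Perm X) (x : X) (C : Finset (Finset X)) :
    cnt (σ x) (C.image (fun S => S.image σ)) = cnt x C := by
  unfold cnt
  rw [Finset.filter_image, Finset.card_image_of_injective _
    (Finset.image_injective σ.injective)]
  congr 1
  apply Finset.filter_congr
  intro S _
  simp only [Finset.mem_image, decide_eq_decide]
  constructor
  · rintro ⟨a, ha, hax⟩
    rwa [← σ.injective hax]
  · exact fun h => ⟨x, h, rfl⟩

lemma thetaDot_mapPerm (σ : Equiv.Perm X) (r : CoalRanking X) (x : X) :
    thetaDot (r.mapPerm σ) (σ x) = thetaDot r x := by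
  simp [thetaDot, theta, mapPerm, cnt_mapPerm]

end SocRankAux

open SocRankAux

/-- the S sum rule with tie-breaking by S lex-cel satisfies NT, CCON
and AIAW, but does not satisfy IDWS. -/
theorem ssumSL_axioms {X : Type*} [DecidableEq X] [Fintype X]
    (hX : 3 ≤ Fintype.card X) :
    NT (ssumSL : SRSMap X) ∧ CCON (ssumSL : SRSMap X) ∧ AIAW (ssumSL : SRSMap X) ∧
      ¬ IDWS (ssumSL : SRSMap X) := by
  obtain ⟨s, -, hs3⟩ := Finset.exists_subset_card_eq (s := (Finset.univ : Finset X)) hX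
  rw [Finset.card_eq_three] at hs3
  obtain ⟨a, b, c, hab, hac, hbc, -⟩ := hs3
  refine ⟨?_, ?_, ?_, ?_⟩
  · -- NT
    intro σ r x y
    unfold ssumSL slexcel ssum
    rw [thetaDot_mapPerm, thetaDot_mapPerm]
  · -- CCON
    rintro r₁ r₂ r ⟨-, hcl⟩ x y
    have hsx := ssum_concat hcl x
    have hsy := ssum_concat hcl y
    have htx := thetaDot_concat hcl x
    have hty := thetaDot_concat hcl y
    have hlen : (thetaDot r₁ x).length = (thetaDot r₁ y).length := by
      rw [thetaDot_length, thetaDot_length]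
    refine ⟨?_, ?_, ?_, ?_⟩
    · rw [ind_ssumSL, ind_ssumSL, ind_ssumSL]
      rintro ⟨h1, h1'⟩ ⟨h2, h2'⟩
      refine ⟨by omega, by rw [htx, hty, h1', h2']⟩
    · rw [ind_ssumSL, pref_ssumSL, pref_ssumSL]
      rintro ⟨h1, h1'⟩ (h2 | ⟨h2, h2', h2''⟩)
      · exact Or.inl (by omega)
      · refine Or.inr ⟨by omega, ?_, ?_⟩
        · rw [htx, hty, h1', lexGE_append]; exact h2'
        · rw [htx, hty, h1', lexGE_append]; exact h2''
    · rw [pref_ssumSL, ind_ssumSL, pref_ssumSL]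
      rintro (h1 | ⟨h1, h1', h1''⟩) ⟨h2, h2'⟩
      · exact Or.inl (by omega)
      · obtain ⟨ha, hb⟩ := lexGT_append hlen h1' h1'' (thetaDot r₂ x) (thetaDot r₂ y)
        refine Or.inr ⟨by omega, ?_, ?_⟩
        · rw [htx, hty]; exact ha
        · rw [htx, hty]
          intro h3
          exact hb h3
    · rw [pref_ssumSL, pref_ssumSL, pref_ssumSL]
      rintro (h1 | ⟨h1, h1', h1''⟩) (h2 | ⟨h2, h2', h2''⟩)
      · exact Or.inl (by omega)
      · exact Or.inl (by omega)
      · exact Or.inl (by omega)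
      · obtain ⟨ha, hb⟩ := lexGT_append hlen h1' h1'' (thetaDot r₂ x) (thetaDot r₂ y)
        refine Or.inr ⟨by omega, ?_, ?_⟩
        · rw [htx, hty]; exact ha
        · rw [htx, hty]; exact hb
  · -- AIAW
    intro r hlen1
    match hcl : r.classes, hlen1 with
    | [], _ =>
      have hdom : r.domain = ∅ := by simp [CoalRanking.domain, hcl]
      constructor
      · rintro x y ⟨S, hS, -⟩ -
        rw [hdom] at hS
        exact absurd hS (Finset.notMem_empty _)
      · rintro x z ⟨S, hS, -⟩ -
        rw [hdom] at hS
        exact absurd hS (Finset.notMem_empty _)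
    | [C], _ =>
      have hdom : r.domain = C := by simp [CoalRanking.domain, hcl]
      have hth : ∀ w : X, thetaDot r w = [sgn (cnt w C)] := by
        intro w; simp [thetaDot, theta, hcl]
      have hpos : ∀ w : X, (∃ S ∈ C, w ∈ S) → sgn (cnt w C) = 1 := by
        rintro w ⟨S, hS, hw⟩
        have : 0 < cnt w C := Finset.card_pos.2 ⟨S, Finset.mem_filter.2 ⟨hS, hw⟩⟩
        simp [sgn, this]
      have hzero : ∀ w : X, (∀ S ∈ C, w ∉ S) → sgn (cnt w C) = 0 := by
        intro w hw
        have : cnt w C = 0 := by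
          unfold cnt
          rw [Finset.card_eq_zero, Finset.filter_eq_empty_iff]
          exact hw
        simp [sgn, this]
      constructor
      · rintro x y hx hy
        rw [hdom] at hx hy
        rw [ind_ssumSL]
        constructor
        · simp [ssum, hth, hpos x hx, hpos y hy]
        · rw [hth, hth, hpos x hx, hpos y hy]
      · rintro x z hx hz
        rw [hdom] at hx hz
        rw [pref_ssumSL]
        exact Or.inl (by simp [ssum, hth, hpos x hx, hzero z hz])
  · -- ¬ IDWS
    intro hIDWS
    have hba : ¬ b = a := fun h => hab h.symm
    have hca : ¬ c = a := fun h => hac h.symm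
    have hcb : ¬ c = b := fun h => hbc h.symm
    have hab' : ({a} : Finset X) ≠ {b} := fun h => hab (Finset.singleton_injective h)
    have hac2 : ({a} : Finset X) ≠ {b, c} := by
      intro h
      have : b ∈ ({a} : Finset X) := h ▸ Finset.mem_insert_self b {c}
      exact hab (Finset.mem_singleton.1 this).symm
    have hbc2 : ({b} : Finset X) ≠ {b, c} := by
      intro h
      have : c ∈ ({b} : Finset X) := h ▸ Finset.mem_insert_of_mem (Finset.mem_singleton_self c)
      exact hbc (Finset.mem_singleton.1 this).symm
    have hbca : ({b, c} : Finset X) ≠ {a} := by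
      intro h
      have : b ∈ ({a} : Finset X) := h ▸ Finset.mem_insert_self b {c}
      exact hab (Finset.mem_singleton.1 this).symm
    let W : Finset (Finset X) := {({b} : Finset X), ({b, c} : Finset X)}
    let r : CoalRanking X := ⟨[{({a} : Finset X)}, W],
      by intro C hC; fin_cases hC <;> simp [W],
      by
        intro C hC
        fin_cases hC <;> intro S hS <;>
          simp only [W, Finset.mem_singleton, Finset.mem_insert] at hS
        · subst hS; simp
        · rcases hS with rfl | rfl <;> simp,
      by
        refine List.Pairwise.cons ?_ (List.pairwise_singleton _ _)
        intro C' hC'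
        rw [List.mem_singleton] at hC'
        subst hC'
        rw [Finset.disjoint_left]
        intro S hS
        rw [Finset.mem_singleton] at hS
        subst hS
        simp [W, hab', hac2]⟩
    let r' : CoalRanking X :=
      ⟨[{({a} : Finset X)}, {({b} : Finset X)}, {({b, c} : Finset X)}],
      by intro C hC; fin_cases hC <;> simp,
      by
        intro C hC
        fin_cases hC <;> intro S hS <;> simp only [Finset.mem_singleton] at hS <;>
          subst hS <;> simp,
      by
        refine List.Pairwise.cons ?_ (List.Pairwise.cons ?_ (List.pairwise_singleton _ _))
        · intro C' hC'
          simp only [List.mem_cons, List.mem_singleton, List.not_mem_nil, or_false] at hC'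
          rcases hC' with rfl | rfl <;>
            · rw [Finset.disjoint_left]
              intro S hS
              rw [Finset.mem_singleton] at hS
              subst hS
              simp [hab', hac2]
        · intro C' hC'
          rw [List.mem_singleton] at hC'
          subst hC'
          rw [Finset.disjoint_left]
          intro S hS
          rw [Finset.mem_singleton] at hS
          subst hS
          simp [hbc2]⟩
    have hta : thetaDot r a = [1, 0] := by
      simp [r, W, thetaDot, theta, cnt, sgn, Finset.filter_singleton, Finset.filter_insert,
        hab, hac]
    have htb : thetaDot r b = [0, 1] := by
      simp [r, W, thetaDot, theta, cnt, sgn, Finset.filter_singleton, Finset.filter_insert,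
        hba]
    have hta' : thetaDot r' a = [1, 0, 0] := by
      simp [r', thetaDot, theta, cnt, sgn, Finset.filter_singleton, hab, hac]
    have htb' : thetaDot r' b = [0, 1, 1] := by
      simp [r', thetaDot, theta, cnt, sgn, Finset.filter_singleton, hba]
    have hpref : Pref ssumSL r a b := by
      rw [pref_ssumSL]
      refine Or.inr ⟨by simp [ssum, hta, htb], ?_, ?_⟩
      · rw [hta, htb]
        exact Or.inl Nat.zero_lt_one
      · rw [hta, htb]
        rintro (h | ⟨h, -⟩) <;> omega
    have hcontra := hIDWS r r' [{({a} : Finset X)}] [{({b} : Finset X)}, {({b, c} : Finset X)}]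
      W (by simp) rfl rfl (by simp only [List.foldr, Finset.union_empty]; rw [← Finset.insert_eq]) a b hpref
    rw [pref_ssumSL] at hcontra
    have h1 : ssum r' a = 1 := by simp [ssum, hta']
    have h2 : ssum r' b = 2 := by simp [ssum, htb']
    rcases hcontra with h | ⟨h, -⟩ <;> omega
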